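/- arXiv:2001.01867 — 3 statements merged into one kernel-verified Lean document; each statement's English description precedes it below -/
import Mathlib

section
/- Let r ≥ 1 and D_1, D_2 : ℤ_{≥r} → (0,∞) with the convention D_i(r−1) = 1, and write D = (D_1,D_2). Then for any integers r ≤ u ≤ v, D[(u,2)→(v,1)] = (𝒯_{r,1}D)[(u, 2∧(u−r+1)) → (v,1)], where the left-hand side is the single-path partition function Σ over up-right paths from (u,2) to (v,1) of the product of vertex weights D_m(x)/D_m(x−1), and on the right-hand side the starting point is (u,1) when u = r and (u,2) when u > r. -/
open scoped BigOperators

/-- Value of `f : ℤ_{≥ r} → ℝ`, with the convention that values below the domain base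
`r` equal `1`. -/
noncomputable def clo (r : ℤ) (f : ℤ → ℝ) (y : ℤ) : ℝ := if y < r then 1 else f y

/-- The sum `Σ_{m=r}^{x} g(m)/f(m−1)` with the convention `f(r−1) = 1`. -/
noncomputable def pitSum (r : ℤ) (f g : ℤ → ℝ) (x : ℤ) : ℝ :=
  ∑ m ∈ Finset.Icc r x, g m / clo r f (m - 1)

/-- `(g ⊙ f)(x) = f(x) · Σ_{m=r}^{x} g(m)/f(m−1)`, for `f, g : ℤ_{≥r} → (0,∞)`. -/
noncomputable def odot (r : ℤ) (g f : ℤ → ℝ) : ℤ → ℝ := fun x => f x * pitSum r f g x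

/-- `(f ⊗ g)(x) = g(x) · (Σ_{m=r}^{x} g(m)/f(m−1))⁻¹`, for `f, g : ℤ_{≥r} → (0,∞)`. -/
noncomputable def otimes (r : ℤ) (f g : ℤ → ℝ) : ℤ → ℝ := fun x => g x * (pitSum r f g x)⁻¹

/-- The operator `𝒯_{r,m}`: replaces `(D_m, D_{m+1})` by `(D_{m+1}⊙D_m, D_m⊗D_{m+1})`
and leaves the other entries unchanged. -/
noncomputable def Tro (r m : ℤ) (D : ℤ → ℤ → ℝ) : ℤ → ℤ → ℝ :=
  fun i => if i = m then odot r (D (m + 1)) (D m)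
    else if i = m + 1 then otimes r (D m) (D (m + 1))
    else D i

/-- A lattice step: one to the right, or down one level. -/
def IsStep (p q : ℤ × ℤ) : Prop :=
  (q.1 = p.1 + 1 ∧ q.2 = p.2) ∨ (q.1 = p.1 ∧ q.2 = p.2 - 1)

/-- A non-intersecting multipath from `U` to `V`; points `(x, m)` must satisfy the
domain condition `x ≥ rl m`, and the paths are pairwise disjoint as sets of points. -/
structure Multipath (rl : ℤ → ℤ) {k : ℕ} (U V : Fin k → ℤ × ℤ) where
  pts : Fin k → List (ℤ × ℤ)
  ne : ∀ i, pts i ≠ []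
  chain : ∀ i, (pts i).Chain' IsStep
  head : ∀ i, (pts i).head? = some (U i)
  last : ∀ i, (pts i).getLast? = some (V i)
  dom : ∀ i, ∀ p ∈ pts i, rl p.2 ≤ p.1
  disj : ∀ i j, i ≠ j → ∀ p ∈ pts i, p ∉ pts j

/-- The weight of a single path: the product of `D_m(x)/D_m(x−1)` over its points,
with the convention `D_m(r_m − 1) = 1`. -/
noncomputable def pathWeight (rl : ℤ → ℤ) (D : ℤ → ℤ → ℝ) (l : List (ℤ × ℤ)) : ℝ :=
  (l.map (fun p => D p.2 p.1 / clo (rl p.2) (D p.2) (p.1 - 1))).prod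

/-- The partition function `D[U → V]`: the sum over non-intersecting multipaths from
`U` to `V` of the product of the weights of the paths (a finite sum, written as a
`tsum` over the type of multipaths; it is `0` if no multipath exists). -/
noncomputable def partFn (rl : ℤ → ℤ) (D : ℤ → ℤ → ℝ) {k : ℕ} (U V : Fin k → ℤ × ℤ) : ℝ :=
  ∑' π : Multipath rl U V, ∏ i, pathWeight rl D (π.pts i)

/-!
A single path from `(u, 2)` to `(v, 1)` runs along level 2 from `u` to some column `t ∈ [u, v]`,
steps down, and runs along level 1 to `v`. Along a level the vertex weights `D(x)/D(x-1)`
telescope, so with `S = pitSum r D₁ D₂`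
`D[(u,2) → (v,1)] = D₁(v)/D₂(u-1) · Σ_{t=u}^{v} D₂(t)/D₁(t-1) = D₁(v)/D₂(u-1) · (S(v) - S(u-1))`.
For the transformed weights `D₁ S` and `D₂ / S`, the summand `D₂(t) S(t)⁻¹ / (D₁(t-1) S(t-1))`
equals `S(t-1)⁻¹ - S(t)⁻¹` because `S(t) - S(t-1) = D₂(t)/D₁(t-1)`, so the sum telescopes once more
and gives the same value. When `u = r` the transformed path starts on level 1, and its weight
`(D₂ ⊙ D₁)(v) = D₁(v) S(v)` matches the left side since `S(r-1) = 0`.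
-/

open Finset

namespace SinglePath

theorem sum_Icc_sub_pred {M : Type*} [AddCommGroup M] (F : ℤ → M) {a b : ℤ} (hab : a - 1 ≤ b) :
    ∑ t ∈ Icc a b, (F t - F (t - 1)) = F b - F (a - 1) := by
  induction b, hab using Int.leInduction with
  | base => rw [Icc_eq_empty (by omega), sum_empty, sub_self]
  | succ b hb ih =>
    rw [← insert_Icc_right_eq_Icc_add_one (by omega), sum_insert (by simp), ih,
      add_sub_cancel_right]
    abel

section Clo

variable {r : ℤ} {f : ℤ → ℝ} {y : ℤ}

theorem clo_of_lt (h : y < r) : clo r f y = 1 := if_pos h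

theorem clo_of_le (h : r ≤ y) : clo r f y = f y := if_neg (not_lt.mpr h)

theorem clo_pos (hf : ∀ x, r ≤ x → 0 < f x) (y : ℤ) : 0 < clo r f y := by
  unfold clo
  split_ifs with h
  · exact one_pos
  · exact hf y (not_lt.mp h)

theorem clo_ne_zero (hf : ∀ x, r ≤ x → f x ≠ 0) (y : ℤ) : clo r f y ≠ 0 := by
  unfold clo
  split_ifs with h
  · exact one_ne_zero
  · exact hf y (not_lt.mp h)

end Clo

/-- The horizontal segment `(a, m), (a + 1, m), …, (b, m)`; empty if `b < a`. -/
def hseg (m a b : ℤ) : List (ℤ × ℤ) :=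
  (List.range (b - a + 1).toNat).map fun i : ℕ => (a + i, m)

section Hseg

variable {m a b : ℤ}

theorem hseg_of_lt (h : b < a) : hseg m a b = [] := by
  simp [hseg, show (b - a + 1).toNat = 0 by omega]

theorem hseg_self (m a : ℤ) : hseg m a a = [(a, m)] := by
  simp [hseg]

theorem hseg_succ_right (h : a ≤ b + 1) : hseg m a (b + 1) = hseg m a b ++ [(b + 1, m)] := by
  rw [hseg, show (b + 1 - a + 1).toNat = (b - a + 1).toNat + 1 by omega, List.range_succ,
    List.map_append, List.map_singleton, show a + ((b - a + 1).toNat : ℤ) = b + 1 by omega]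
  rfl

theorem hseg_eq_cons (h : a ≤ b) : hseg m a b = (a, m) :: hseg m (a + 1) b := by
  rw [hseg, show (b - a + 1).toNat = (b - (a + 1) + 1).toNat + 1 by omega,
    List.range_succ_eq_map]
  simp only [hseg, List.map_cons, List.map_map, Nat.cast_zero, add_zero]
  congr 2
  ext i
  · simp only [Function.comp_apply, Nat.cast_succ]
    ring
  · rfl

theorem mem_hseg {p : ℤ × ℤ} : p ∈ hseg m a b ↔ p.2 = m ∧ a ≤ p.1 ∧ p.1 ≤ b := by
  simp only [hseg, List.mem_map, List.mem_range]
  constructor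
  · rintro ⟨i, hi, rfl⟩
    exact ⟨rfl, by omega, by omega⟩
  · rintro ⟨h2, ha, hb⟩
    exact ⟨(p.1 - a).toNat, by omega, Prod.ext (by simp; omega) h2.symm⟩

theorem head?_hseg (h : a ≤ b) : (hseg m a b).head? = some (a, m) := by
  rw [hseg_eq_cons h, List.head?_cons]

theorem getLast?_hseg (h : a ≤ b) : (hseg m a b).getLast? = some (b, m) := by
  simp only [hseg, List.getLast?_map, List.getLast?_range]
  rw [if_neg (by omega)]
  simp only [Option.map_some, Option.some.injEq, Prod.mk.injEq, and_true]
  omega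

theorem isChain_hseg : (hseg m a b).IsChain IsStep := by
  rw [hseg, List.isChain_map, List.isChain_range]
  intro i _
  left
  constructor <;> simp [add_assoc]

end Hseg

def stepDownPath (u v t : ℤ) : List (ℤ × ℤ) := hseg 2 u t ++ hseg 1 t v

section StepDownPath

variable {u v t : ℤ}

theorem mem_stepDownPath {p : ℤ × ℤ} :
    p ∈ stepDownPath u v t ↔ (p.2 = 2 ∧ u ≤ p.1 ∧ p.1 ≤ t) ∨ (p.2 = 1 ∧ t ≤ p.1 ∧ p.1 ≤ v) := by
  rw [stepDownPath, List.mem_append, mem_hseg, mem_hseg]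

theorem head?_stepDownPath (h : u ≤ t) : (stepDownPath u v t).head? = some (u, 2) := by
  rw [stepDownPath, List.head?_append, head?_hseg h, Option.some_or]

theorem getLast?_stepDownPath (h : t ≤ v) : (stepDownPath u v t).getLast? = some (v, 1) := by
  rw [stepDownPath, List.getLast?_append, getLast?_hseg h, Option.some_or]

theorem isChain_stepDownPath (hut : u ≤ t) (htv : t ≤ v) :
    (stepDownPath u v t).IsChain IsStep := by
  refine isChain_hseg.append isChain_hseg fun x hx y hy => ?_
  rw [getLast?_hseg hut, Option.mem_some_iff] at hx
  rw [head?_hseg htv, Option.mem_some_iff] at hy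
  subst hx hy
  exact Or.inr ⟨rfl, by norm_num⟩

theorem injOn_stepDownPath : Set.InjOn (stepDownPath u v) (Icc u v) := by
  intro t ht t' ht' h
  simp only [coe_Icc, Set.mem_Icc] at ht ht'
  have h1 : (t, 1) ∈ stepDownPath u v t' :=
    h ▸ mem_stepDownPath.mpr (.inr ⟨rfl, le_rfl, ht.2⟩)
  have h2 : (t', 1) ∈ stepDownPath u v t :=
    h ▸ mem_stepDownPath.mpr (.inr ⟨rfl, le_rfl, ht'.2⟩)
  simp only [mem_stepDownPath] at h1 h2
  omega

end StepDownPath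

theorem IsStep.snd_le {p q : ℤ × ℤ} (h : IsStep p q) : q.2 ≤ p.2 := by
  rcases h with ⟨-, h⟩ | ⟨-, h⟩ <;> omega

theorem snd_le_of_isChain {p q : ℤ × ℤ} :
    ∀ {l : List (ℤ × ℤ)}, (p :: l).IsChain IsStep → (p :: l).getLast? = some q → q.2 ≤ p.2
  | [], _, hl => by
    obtain rfl : p = q := by simpa using hl
    exact le_rfl
  | x :: l, hc, hl => by
    obtain ⟨hpx, hc⟩ := List.isChain_cons_cons.mp hc
    rw [List.getLast?_cons_cons] at hl
    exact (snd_le_of_isChain hc hl).trans (IsStep.snd_le hpx)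

theorem eq_hseg_of_isChain {m : ℤ} : ∀ {a b : ℤ} {l : List (ℤ × ℤ)},
    ((a, m) :: l).IsChain IsStep → ((a, m) :: l).getLast? = some (b, m) →
      a ≤ b ∧ hseg m a b = (a, m) :: l
  | a, b, [], _, hl => by
    obtain rfl : a = b := by simpa using hl
    exact ⟨le_rfl, hseg_self m a⟩
  | a, b, (x, y) :: l, hc, hl => by
    obtain ⟨hstep, hrest⟩ := List.isChain_cons_cons.mp hc
    rw [List.getLast?_cons_cons] at hl
    simp only [IsStep] at hstep
    rcases hstep with ⟨hx, hy⟩ | ⟨-, hy⟩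
    · subst x y
      obtain ⟨hab, h⟩ := eq_hseg_of_isChain hrest hl
      exact ⟨by omega, by rw [hseg_eq_cons (by omega), h]⟩
    · have := snd_le_of_isChain hrest hl
      simp only at this
      omega

theorem exists_stepDownPath_eq_of_isChain : ∀ {u v : ℤ} {l : List (ℤ × ℤ)},
    ((u, 2) :: l).IsChain IsStep → ((u, 2) :: l).getLast? = some (v, 1) →
      ∃ t ∈ Icc u v, stepDownPath u v t = (u, 2) :: l
  | u, v, [], _, hl => by simp at hl
  | u, v, (x, y) :: l, hc, hl => by
    obtain ⟨hstep, hrest⟩ := List.isChain_cons_cons.mp hc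
    rw [List.getLast?_cons_cons] at hl
    simp only [IsStep] at hstep
    rcases hstep with ⟨hx, hy⟩ | ⟨hx, hy⟩
    · subst x y
      obtain ⟨t, ht, h⟩ := exists_stepDownPath_eq_of_isChain hrest hl
      rw [mem_Icc] at ht
      refine ⟨t, mem_Icc.mpr ⟨by omega, ht.2⟩, ?_⟩
      rw [stepDownPath, hseg_eq_cons (by omega), List.cons_append, ← h, stepDownPath]
    · obtain rfl : y = 1 := by omega
      subst x
      obtain ⟨huv, h⟩ := eq_hseg_of_isChain hrest hl
      exact ⟨u, mem_Icc.mpr ⟨le_rfl, huv⟩, by rw [stepDownPath, hseg_self, h]; rfl⟩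

def IsPath (rl : ℤ → ℤ) (p q : ℤ × ℤ) (l : List (ℤ × ℤ)) : Prop :=
  l.IsChain IsStep ∧ l.head? = some p ∧ l.getLast? = some q ∧ ∀ x ∈ l, rl x.2 ≤ x.1

section PartFn

variable {rl : ℤ → ℤ} {p q : ℤ × ℤ}

theorem Multipath.ext {k : ℕ} {U V : Fin k → ℤ × ℤ} {π π' : Multipath rl U V}
    (h : π.pts = π'.pts) : π = π' := by
  cases π
  cases π'
  cases h
  rfl

def multipathFinOneEquiv (rl : ℤ → ℤ) (p q : ℤ × ℤ) :
    Multipath rl (fun _ : Fin 1 => p) (fun _ => q) ≃ {l // IsPath rl p q l} where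
  toFun π := ⟨π.pts 0, π.chain 0, π.head 0, π.last 0, π.dom 0⟩
  invFun l :=
    { pts := fun _ => l.1
      ne := fun _ h => by simpa [h] using l.2.2.1
      chain := fun _ => l.2.1
      head := fun _ => l.2.2.1
      last := fun _ => l.2.2.2.1
      dom := fun _ => l.2.2.2.2
      disj := fun i j hij => (hij (Subsingleton.elim i j)).elim }
  left_inv π := Multipath.ext (funext fun i => by rw [Subsingleton.elim i 0])
  right_inv _ := rfl

theorem partFn_fin_one_eq_sum (D : ℤ → ℤ → ℝ) {ι : Type*} (s : Finset ι)
    (γ : ι → List (ℤ × ℤ)) (hγ : Set.InjOn γ s) (hpath : ∀ l, IsPath rl p q l ↔ l ∈ γ '' s) :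
    partFn rl D (fun _ : Fin 1 => p) (fun _ => q) = ∑ t ∈ s, pathWeight rl D (γ t) := by
  rw [partFn, ← (multipathFinOneEquiv rl p q).symm.tsum_eq, ← s.tsum_subtype',
    ← tsum_image _ hγ, ← (Equiv.subtypeEquivRight hpath).tsum_eq]
  simp [multipathFinOneEquiv]

theorem isPath_iff_eq_hseg {m a b : ℤ} (hm : rl m ≤ a) (hab : a ≤ b) {l : List (ℤ × ℤ)} :
    IsPath rl (a, m) (b, m) l ↔ l = hseg m a b := by
  constructor
  · rintro ⟨hc, hh, hl, -⟩
    obtain ⟨l, rfl⟩ := List.head?_eq_some_iff.mp hh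
    exact (eq_hseg_of_isChain hc hl).2.symm
  · rintro rfl
    refine ⟨isChain_hseg, head?_hseg hab, getLast?_hseg hab, fun x hx => ?_⟩
    obtain ⟨hx, hax, -⟩ := mem_hseg.mp hx
    rw [hx]
    exact hm.trans hax

theorem isPath_iff_mem_image_stepDownPath {u v : ℤ} (h2 : rl 2 ≤ u) (h1 : rl 1 ≤ u)
    {l : List (ℤ × ℤ)} : IsPath rl (u, 2) (v, 1) l ↔ l ∈ stepDownPath u v '' Icc u v := by
  constructor
  · rintro ⟨hc, hh, hl, -⟩
    obtain ⟨l, rfl⟩ := List.head?_eq_some_iff.mp hh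
    obtain ⟨t, ht, h⟩ := exists_stepDownPath_eq_of_isChain hc hl
    exact ⟨t, ht, h⟩
  · rintro ⟨t, ht, rfl⟩
    obtain ⟨hut, htv⟩ := mem_Icc.mp ht
    refine ⟨isChain_stepDownPath hut htv, head?_stepDownPath hut, getLast?_stepDownPath htv,
      fun x hx => ?_⟩
    rcases mem_stepDownPath.mp hx with ⟨hx, hux, -⟩ | ⟨hx, htx, -⟩ <;> rw [hx] <;> omega

variable (D : ℤ → ℤ → ℝ)

theorem pathWeight_append (l₁ l₂ : List (ℤ × ℤ)) :
    pathWeight rl D (l₁ ++ l₂) = pathWeight rl D l₁ * pathWeight rl D l₂ := by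
  rw [pathWeight, List.map_append, List.prod_append, pathWeight, pathWeight]

theorem pathWeight_hseg {m a b : ℤ} (hm : rl m ≤ a) (hD : ∀ x, rl m ≤ x → D m x ≠ 0)
    (hab : a - 1 ≤ b) :
    pathWeight rl D (hseg m a b) = clo (rl m) (D m) b / clo (rl m) (D m) (a - 1) := by
  induction b, hab using Int.leInduction with
  | base => rw [hseg_of_lt (by omega), pathWeight, List.map_nil, List.prod_nil,
      div_self (clo_ne_zero hD _)]
  | succ b hb ih =>
    rw [hseg_succ_right (by omega), pathWeight_append, ih, clo_of_le (by omega : rl m ≤ b + 1)]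
    simp only [pathWeight, List.map_cons, List.map_nil, List.prod_cons, List.prod_nil, mul_one,
      add_sub_cancel_right]
    field_simp [clo_ne_zero hD]

theorem pathWeight_stepDownPath {u v t : ℤ} (h2 : rl 2 ≤ u) (h1 : rl 1 ≤ u)
    (hD2 : ∀ x, rl 2 ≤ x → D 2 x ≠ 0) (hD1 : ∀ x, rl 1 ≤ x → D 1 x ≠ 0)
    (hut : u ≤ t) (htv : t ≤ v) :
    pathWeight rl D (stepDownPath u v t)
      = D 2 t / clo (rl 2) (D 2) (u - 1) * (D 1 v / clo (rl 1) (D 1) (t - 1)) := by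
  rw [stepDownPath, pathWeight_append, pathWeight_hseg D h2 hD2 (by omega),
    pathWeight_hseg D (h1.trans hut) hD1 (by omega), clo_of_le (h2.trans hut),
    clo_of_le (h1.trans (hut.trans htv))]

theorem partFn_level {m u v : ℤ} (hm : rl m ≤ u) (hD : ∀ x, rl m ≤ x → D m x ≠ 0)
    (huv : u ≤ v) :
    partFn rl D (fun _ : Fin 1 => (u, m)) (fun _ => (v, m))
      = D m v / clo (rl m) (D m) (u - 1) := by
  rw [partFn_fin_one_eq_sum D {()} (fun _ => hseg m u v)
      (Set.subsingleton_of_subsingleton.injOn _)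
      (fun _ => by simpa using isPath_iff_eq_hseg hm huv),
    sum_singleton, pathWeight_hseg D hm hD (by omega), clo_of_le (hm.trans huv)]

theorem partFn_two_one {u v : ℤ} (h2 : rl 2 ≤ u) (h1 : rl 1 ≤ u)
    (hD2 : ∀ x, rl 2 ≤ x → D 2 x ≠ 0) (hD1 : ∀ x, rl 1 ≤ x → D 1 x ≠ 0) :
    partFn rl D (fun _ : Fin 1 => (u, 2)) (fun _ => (v, 1))
      = D 1 v / clo (rl 2) (D 2) (u - 1) * ∑ t ∈ Icc u v, D 2 t / clo (rl 1) (D 1) (t - 1) := by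
  rw [partFn_fin_one_eq_sum D (Icc u v) (stepDownPath u v) injOn_stepDownPath
      (fun _ => isPath_iff_mem_image_stepDownPath h2 h1), mul_sum]
  refine sum_congr rfl fun t ht => ?_
  obtain ⟨hut, htv⟩ := mem_Icc.mp ht
  rw [pathWeight_stepDownPath D h2 h1 hD2 hD1 hut htv]
  ring

end PartFn

section Pitman

variable {r : ℤ} {f g : ℤ → ℝ}

theorem pitSum_pred_self : pitSum r f g (r - 1) = 0 := by
  rw [pitSum, Icc_eq_empty (by omega), sum_empty]

theorem pitSum_sub_pitSum_pred {x : ℤ} (hx : r ≤ x) :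
    pitSum r f g x - pitSum r f g (x - 1) = g x / clo r f (x - 1) := by
  rw [pitSum, pitSum, ← insert_Icc_sub_one_right_eq_Icc hx, sum_insert (by simp),
    add_sub_cancel_right]

theorem sum_div_clo_pred_eq_pitSum_sub {u v : ℤ} (hu : r ≤ u) (huv : u - 1 ≤ v) :
    ∑ t ∈ Icc u v, g t / clo r f (t - 1) = pitSum r f g v - pitSum r f g (u - 1) := by
  rw [← sum_Icc_sub_pred _ huv]
  exact sum_congr rfl fun t ht => (pitSum_sub_pitSum_pred (hu.trans (mem_Icc.mp ht).1)).symm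

theorem clo_otimes {x : ℤ} (hgr : g r ≠ 0) (hx : r ≤ x) :
    clo (r + 1) (otimes r f g) x = g x / pitSum r f g x := by
  rcases hx.eq_or_lt with rfl | hx
  -- at `x = r`, outside the domain of `f ⊗ g`, both sides are `1`
  · have hS := pitSum_sub_pitSum_pred (f := f) (g := g) (le_refl r)
    rw [pitSum_pred_self, sub_zero, clo_of_lt (by omega), div_one] at hS
    rw [clo_of_lt (by omega), hS, div_self hgr]
  · rw [clo_of_le (by omega), otimes, div_eq_mul_inv]

variable (hf : ∀ x, r ≤ x → 0 < f x) (hg : ∀ x, r ≤ x → 0 < g x)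
include hf hg

theorem pitSum_pos {x : ℤ} (hx : r ≤ x) : 0 < pitSum r f g x :=
  sum_pos (fun m hm => div_pos (hg m (mem_Icc.mp hm).1) (clo_pos hf _))
    ⟨r, mem_Icc.mpr ⟨le_rfl, hx⟩⟩

theorem odot_pos {x : ℤ} (hx : r ≤ x) : 0 < odot r g f x :=
  mul_pos (hf x hx) (pitSum_pos hf hg hx)

theorem otimes_pos {x : ℤ} (hx : r ≤ x) : 0 < otimes r f g x :=
  mul_pos (hg x hx) (inv_pos.mpr (pitSum_pos hf hg hx))

theorem otimes_div_odot_pred {t : ℤ} (ht : r < t) :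
    otimes r f g t / odot r g f (t - 1) = (pitSum r f g (t - 1))⁻¹ - (pitSum r f g t)⁻¹ := by
  have h0 := (pitSum_pos hf hg (show r ≤ t - 1 by omega)).ne'
  have h1 := (pitSum_pos hf hg ht.le).ne'
  have h2 := (hf (t - 1) (by omega)).ne'
  have hgt : g t = (pitSum r f g t - pitSum r f g (t - 1)) * f (t - 1) := by
    rw [pitSum_sub_pitSum_pred ht.le, clo_of_le (by omega), div_mul_cancel₀ _ h2]
  rw [otimes, odot, hgt]
  field_simp

theorem sum_otimes_div_odot_pred {u v : ℤ} (hu : r < u) (huv : u - 1 ≤ v) :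
    ∑ t ∈ Icc u v, otimes r f g t / clo r (odot r g f) (t - 1)
      = (pitSum r f g (u - 1))⁻¹ - (pitSum r f g v)⁻¹ := by
  have h := sum_Icc_sub_pred (fun t => -(pitSum r f g t)⁻¹) huv
  simp only [neg_sub_neg] at h
  rw [← h]
  refine sum_congr rfl fun t ht => ?_
  have hut := (mem_Icc.mp ht).1
  rw [clo_of_le (by omega), otimes_div_odot_pred hf hg (hu.trans_le hut)]

end Pitman

theorem Tro_apply_self (r m : ℤ) (D : ℤ → ℤ → ℝ) : Tro r m D m = odot r (D (m + 1)) (D m) :=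
  if_pos rfl

theorem Tro_apply_succ (r m : ℤ) (D : ℤ → ℤ → ℝ) :
    Tro r m D (m + 1) = otimes r (D m) (D (m + 1)) := by
  simp [Tro]

end SinglePath

open SinglePath in
theorem single_path_invariance_general (r : ℤ) (D : ℤ → ℤ → ℝ)
    (hD : ∀ i : ℤ, i = 1 ∨ i = 2 → ∀ x : ℤ, r ≤ x → 0 < D i x)
    (u v : ℤ) (hru : r ≤ u) (huv : u ≤ v) :
    partFn (fun _ => r) D (fun _ : Fin 1 => (u, 2)) (fun _ => (v, 1))
      = partFn (fun i => if i = 2 then r + 1 else r) (Tro r 1 D)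
          (fun _ : Fin 1 => (u, min 2 (u - r + 1))) (fun _ => (v, 1)) := by
  have hD1 : ∀ x, r ≤ x → 0 < D 1 x := hD 1 (.inl rfl)
  have hD2 : ∀ x, r ≤ x → 0 < D 2 x := hD 2 (.inr rfl)
  have hT1 : Tro r 1 D 1 = odot r (D 2) (D 1) := Tro_apply_self r 1 D
  have hT2 : Tro r 1 D 2 = otimes r (D 1) (D 2) := Tro_apply_succ r 1 D
  have hT1_ne : ∀ x, r ≤ x → Tro r 1 D 1 x ≠ 0 := fun x hx => hT1 ▸ (odot_pos hD1 hD2 hx).ne'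
  rw [partFn_two_one D hru hru (fun x hx => (hD2 x hx).ne') (fun x hx => (hD1 x hx).ne'),
    sum_div_clo_pred_eq_pitSum_sub hru (by omega)]
  rcases hru.eq_or_lt with rfl | hru
  · rw [show min 2 (r - r + 1) = 1 by omega, partFn_level (Tro r 1 D) ?_ ?_ huv]
    · simp [hT1, clo_of_lt, pitSum_pred_self, odot]
    · simp
    · simpa using hT1_ne
  · rw [min_eq_left (by omega), partFn_two_one (Tro r 1 D) ?_ ?_ ?_ ?_]
    · simp only [↓reduceIte, Int.reduceEq, hT1, hT2]
      rw [sum_otimes_div_odot_pred hD1 hD2 hru (by omega),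
        clo_otimes (hD2 r le_rfl).ne' (by omega), clo_of_le (by omega : r ≤ u - 1), odot]
      have hSu := (pitSum_pos hD1 hD2 (by omega : r ≤ u - 1)).ne'
      have hSv := (pitSum_pos hD1 hD2 (by omega : r ≤ v)).ne'
      have hDu := (hD2 (u - 1) (by omega)).ne'
      field_simp
    · simpa using hru
    · simpa using hru.le
    · simpa [hT2] using fun x hx => (otimes_pos hD1 hD2 (by omega : r ≤ x)).ne'
    · simpa using hT1_ne

/-- **Step 1 of the proof of Theorem 2.6** (`n = 2`, `k = 1`): for `D_1, D_2 : ℤ_{≥r} → (0,∞)`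
and `r ≤ u ≤ v`, `D[(u,2)→(v,1)] = (𝒯_{r,1}D)[(u, 2∧(u−r+1)) → (v,1)]`. -/
theorem single_path_invariance (r : ℤ) (hr : 1 ≤ r) (D : ℤ → ℤ → ℝ)
    (hD : ∀ i : ℤ, i = 1 ∨ i = 2 → ∀ x : ℤ, r ≤ x → 0 < D i x)
    (u v : ℤ) (hru : r ≤ u) (huv : u ≤ v) :
    partFn (fun _ => r) D (fun _ : Fin 1 => (u, 2)) (fun _ => (v, 1))
      = partFn (fun i => if i = 2 then r + 1 else r) (Tro r 1 D)
          (fun _ : Fin 1 => (u, min 2 (u - r + 1))) (fun _ => (v, 1)) :=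
  single_path_invariance_general r D hD u v hru huv
end

section
/- Let r ≥ 1 and D_1, D_2 : ℤ_{≥r} → (0,∞) with the convention D_i(r−1) = 1, and write D = (D_1,D_2). Let U = ((u_1,2),…,(u_k,2)) and V = ((v_1,1),…,(v_k,1)) with r ≤ u_1 < … < u_k and r ≤ v_1 < … < v_k be an endpoint pair. Then D[U→V] = (𝒯_{r,1}D)[⇑_{r,1}U → V], where ⇑_{r,1}U := ((u_1, 2∧(u_1−r+1)),…,(u_k, 2∧(u_k−r+1))). -/
open scoped BigOperators

/-!
Every path from `(u i, 2)` to `(v i, 1)` is a hook: it runs along level `2` up to a switch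
point `s i`, steps down, and runs along level `1`. Non-intersection only confines each `s i` to
an interval `[lowerSwitch u v i, upperSwitch u v i]` cut out by the neighbouring endpoints, so
both partition functions factor as products over `i` of sums over these intervals (on the right
the first path is flat when `u 0 = r`). With `S = pitSum r (D 1) (D 2)`, the left-hand summand
`D 2 s / D 1 (s - 1)` is the increment `S s - S (s - 1)` and the transformed summand is
`(S (s - 1))⁻¹ - (S s)⁻¹`, so both sums telescope, and the `i`-th factors differ by
`S (v i) * S (u i - 1) / (S (lowerSwitch u v i - 1) * S (upperSwitch u v i))`, provided
`S (r - 1)` is read as `1`, i.e. `S` is replaced by `clo r S`. The endpoints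
`lowerSwitch u v (j + 1) - 1` and `upperSwitch u v j` are `u (j + 1) - 1` and `v j` in some order,
so these ratios multiply to `1`.
-/

open Finset

theorem clo_of_lt {r y : ℤ} {f : ℤ → ℝ} (h : y < r) : clo r f y = 1 := if_pos h

theorem clo_of_le {r y : ℤ} {f : ℤ → ℝ} (h : r ≤ y) : clo r f y = f y := if_neg (not_lt.2 h)

theorem clo_pos {r : ℤ} {f : ℤ → ℝ} (hf : ∀ x, r ≤ x → 0 < f x) (y : ℤ) : 0 < clo r f y := by
  unfold clo
  split_ifs with h
  · exact one_pos
  · exact hf y (not_lt.1 h)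

theorem sum_Icc_sub_sub_one {G : Type*} [AddCommGroup G] (F : ℤ → G) {a b : ℤ} (h : a ≤ b + 1) :
    ∑ x ∈ Icc a b, (F x - F (x - 1)) = F b - F (a - 1) := by
  induction b, (by omega : a - 1 ≤ b) using Int.leInduction with
  | base => rw [Icc_eq_empty (by omega), sum_empty, sub_self]
  | succ b hb ih =>
    rw [← insert_Icc_right_eq_Icc_add_one (by omega), sum_insert (by simp), ih (by omega),
      add_sub_cancel_right]
    abel

section PitSum

variable {r : ℤ} {f g : ℤ → ℝ}

theorem pitSum_of_lt {x : ℤ} (h : x < r) : pitSum r f g x = 0 := by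
  rw [pitSum, Icc_eq_empty (not_le.2 h), sum_empty]

theorem pitSum_pos (hf : ∀ x, r ≤ x → 0 < f x) (hg : ∀ x, r ≤ x → 0 < g x) {x : ℤ}
    (hx : r ≤ x) : 0 < pitSum r f g x :=
  sum_pos (fun m hm => div_pos (hg m (mem_Icc.1 hm).1) (clo_pos hf _)) ⟨r, mem_Icc.2 ⟨le_rfl, hx⟩⟩

theorem pitSum_sub_pitSum_sub_one {x : ℤ} (hx : r ≤ x) :
    pitSum r f g x - pitSum r f g (x - 1) = g x / clo r f (x - 1) := by
  rw [pitSum, pitSum, ← insert_Icc_sub_one_right_eq_Icc hx, sum_insert (by simp),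
    add_sub_cancel_right]

end PitSum

/-! ### Segments and hooks -/

def seg (m a b : ℤ) : List (ℤ × ℤ) :=
  if a ≤ b then (a, m) :: seg m (a + 1) b else []
termination_by (b + 1 - a).toNat

theorem seg_of_le {m a b : ℤ} (h : a ≤ b) : seg m a b = (a, m) :: seg m (a + 1) b := by
  rw [seg, if_pos h]

theorem seg_of_lt {m a b : ℤ} (h : b < a) : seg m a b = [] := by
  rw [seg, if_neg (not_le.2 h)]

theorem mem_seg {m a b : ℤ} {p : ℤ × ℤ} : p ∈ seg m a b ↔ p.2 = m ∧ a ≤ p.1 ∧ p.1 ≤ b := by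
  induction a using seg.induct b with
  | case1 a h ih =>
    rw [seg_of_le h, List.mem_cons, ih, Prod.ext_iff]
    omega
  | case2 a h => rw [seg_of_lt (not_le.1 h)]; simp only [List.not_mem_nil, false_iff]; omega

theorem head?_seg {m a b : ℤ} (h : a ≤ b) : (seg m a b).head? = some (a, m) := by
  rw [seg_of_le h, List.head?_cons]

theorem getLast?_seg {m a b : ℤ} (h : a ≤ b) : (seg m a b).getLast? = some (b, m) := by
  induction a using seg.induct b with
  | case1 a h' ih =>
    rw [seg_of_le h']
    rcases h.eq_or_lt with rfl | hlt
    · rw [seg_of_lt (lt_add_one a)]; rfl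
    · rw [List.getLast?_cons, ih (by omega)]; rfl
  | case2 a h' => exact absurd h h'

theorem isChain_seg (m a b : ℤ) : (seg m a b).IsChain IsStep := by
  induction a using seg.induct b with
  | case1 a h ih =>
    rw [seg_of_le h, List.isChain_cons]
    refine ⟨fun y hy => ?_, ih⟩
    rcases le_or_gt (a + 1) b with h' | h'
    · rw [head?_seg h', Option.mem_some_iff] at hy
      exact Or.inl ⟨by rw [← hy], by rw [← hy]⟩
    · simp [seg_of_lt h'] at hy
  | case2 a h => rw [seg_of_lt (not_le.1 h)]; exact List.isChain_nil

theorem pathWeight_cons (rl : ℤ → ℤ) (D : ℤ → ℤ → ℝ) (p : ℤ × ℤ) (l : List (ℤ × ℤ)) :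
    pathWeight rl D (p :: l) = D p.2 p.1 / clo (rl p.2) (D p.2) (p.1 - 1) * pathWeight rl D l :=
  List.prod_cons

theorem pathWeight_append (rl : ℤ → ℤ) (D : ℤ → ℤ → ℝ) (l l' : List (ℤ × ℤ)) :
    pathWeight rl D (l ++ l') = pathWeight rl D l * pathWeight rl D l' := by
  simp only [pathWeight, List.map_append, List.prod_append]

theorem pathWeight_seg (rl : ℤ → ℤ) (D : ℤ → ℤ → ℝ) {m a b : ℤ}
    (hD : ∀ x, rl m ≤ x → D m x ≠ 0) (ha : rl m ≤ a) (hab : a ≤ b) :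
    pathWeight rl D (seg m a b) = D m b / clo (rl m) (D m) (a - 1) := by
  induction a using seg.induct b with
  | case1 a h ih =>
    rw [seg_of_le h, pathWeight_cons]
    rcases hab.eq_or_lt with rfl | hlt
    · rw [seg_of_lt (lt_add_one a), pathWeight, List.map_nil, List.prod_nil, mul_one]
    · rw [ih (by omega) (by omega), add_sub_cancel_right, clo_of_le ha]
      field_simp [hD a ha]
  | case2 a h' => exact absurd hab h'

theorem snd_le_of_isChain {p q : ℤ × ℤ} {l : List (ℤ × ℤ)} (hl : (p :: l).IsChain IsStep)
    (hq : q ∈ p :: l) : q.2 ≤ p.2 := by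
  induction l generalizing p with
  | nil => rw [List.mem_singleton.1 hq]
  | cons y t ih =>
    rw [List.isChain_cons_cons] at hl
    rcases List.mem_cons.1 hq with rfl | hq
    · exact le_rfl
    · have := ih hl.2 hq
      rcases hl.1 with ⟨-, h⟩ | ⟨-, h⟩ <;> omega

theorem eq_seg_of_isChain {m a b : ℤ} {l : List (ℤ × ℤ)} (hl : l.IsChain IsStep)
    (hhead : l.head? = some (a, m)) (hlast : l.getLast? = some (b, m)) : l = seg m a b := by
  induction l generalizing a with
  | nil => simp at hhead
  | cons x t ih =>
    obtain rfl : x = (a, m) := Option.some.inj hhead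
    cases t with
    | nil =>
      obtain rfl : a = b := by simpa using hlast
      rw [seg_of_le le_rfl, seg_of_lt (lt_add_one a)]
    | cons y t =>
      rw [List.isChain_cons_cons] at hl
      rw [List.getLast?_cons_cons] at hlast
      have hb : (b, m) ∈ y :: t := List.mem_of_getLast? hlast
      rcases hl.1 with ⟨h1, h2⟩ | ⟨-, h2⟩
      · obtain rfl : y = (a + 1, m) := Prod.ext h1 h2
        have htail := ih hl.2 rfl hlast
        have hab : a + 1 ≤ b := (mem_seg.1 (htail ▸ hb)).2.1
        rw [htail, seg_of_le (by omega : a ≤ b)]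
      · have := snd_le_of_isChain hl.2 hb
        omega

/-- The path from `(a, 2)` along level `2` to `(s, 2)`, down to `(s, 1)` and along level `1` to
`(b, 1)`; for `m ≠ 2` only its level-`1` part is kept, which is a path from `(a, 1)` when
`s = a`. -/
def hook (m a s b : ℤ) : List (ℤ × ℤ) := (if m = 2 then seg 2 a s else []) ++ seg 1 s b

theorem mem_hook {m a s b : ℤ} {p : ℤ × ℤ} :
    p ∈ hook m a s b ↔ (m = 2 ∧ p.2 = 2 ∧ a ≤ p.1 ∧ p.1 ≤ s) ∨ (p.2 = 1 ∧ s ≤ p.1 ∧ p.1 ≤ b) := by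
  unfold hook
  split_ifs with hm <;> simp [mem_seg, hm]

theorem hook_one (a b : ℤ) : hook 1 a a b = seg 1 a b := rfl

theorem head?_hook {m a s b : ℤ} (hm : m = 1 ∨ m = 2) (hs : m = 2 ∨ s = a) (has : a ≤ s)
    (hsb : s ≤ b) : (hook m a s b).head? = some (a, m) := by
  rcases hm with rfl | rfl
  · obtain rfl : s = a := hs.resolve_left (by norm_num)
    exact head?_seg hsb
  · rw [hook, if_pos rfl, List.head?_append, head?_seg has]; rfl

theorem getLast?_hook {m a s b : ℤ} (hsb : s ≤ b) : (hook m a s b).getLast? = some (b, 1) := by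
  rw [hook, List.getLast?_append, getLast?_seg hsb]; rfl

theorem isChain_hook (m a s b : ℤ) : (hook m a s b).IsChain IsStep := by
  unfold hook
  split_ifs
  · refine List.isChain_append.2 ⟨isChain_seg 2 a s, isChain_seg 1 s b, fun x hx y hy => ?_⟩
    rcases lt_or_ge s a with h | h
    · simp [seg_of_lt h] at hx
    rcases lt_or_ge b s with h' | h'
    · simp [seg_of_lt h'] at hy
    rw [getLast?_seg h, Option.mem_some_iff] at hx
    rw [head?_seg h', Option.mem_some_iff] at hy
    subst hx hy
    exact Or.inr ⟨rfl, rfl⟩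
  · exact isChain_seg 1 s b

theorem hook_inj {m a s s' b : ℤ} (hs : s ≤ b) (hs' : s' ≤ b)
    (h : hook m a s b = hook m a s' b) : s = s' := by
  have h₁ : ((s, 1) : ℤ × ℤ) ∈ hook m a s' b := h ▸ mem_hook.2 (Or.inr ⟨rfl, le_rfl, hs⟩)
  have h₂ : ((s', 1) : ℤ × ℤ) ∈ hook m a s b := h ▸ mem_hook.2 (Or.inr ⟨rfl, le_rfl, hs'⟩)
  simp only [mem_hook] at h₁ h₂
  omega

theorem exists_eq_hook_two {a b : ℤ} {l : List (ℤ × ℤ)} (hl : l.IsChain IsStep)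
    (hhead : l.head? = some (a, 2)) (hlast : l.getLast? = some (b, 1)) :
    ∃ s, a ≤ s ∧ s ≤ b ∧ l = hook 2 a s b := by
  induction l generalizing a with
  | nil => simp at hhead
  | cons x t ih =>
    obtain rfl : x = (a, 2) := Option.some.inj hhead
    cases t with
    | nil => simp at hlast
    | cons y t =>
      rw [List.isChain_cons_cons] at hl
      rw [List.getLast?_cons_cons] at hlast
      rcases hl.1 with ⟨h1, h2⟩ | ⟨h1, h2⟩
      · obtain rfl : y = (a + 1, 2) := Prod.ext h1 h2
        obtain ⟨s, has, hsb, htail⟩ := ih hl.2 rfl hlast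
        refine ⟨s, by omega, hsb, ?_⟩
        rw [htail, hook, hook, if_pos rfl, if_pos rfl, seg_of_le (by omega : a ≤ s)]
        rfl
      · obtain rfl : y = (a, 1) := Prod.ext h1 h2
        have htail := eq_seg_of_isChain hl.2 rfl hlast
        have hab : a ≤ b := (mem_seg.1 (htail ▸ List.mem_of_getLast? hlast)).2.1
        refine ⟨a, le_rfl, hab, ?_⟩
        rw [htail, hook, if_pos rfl, seg_of_le le_rfl, seg_of_lt (lt_add_one a)]
        rfl

theorem exists_eq_hook {m a b : ℤ} {l : List (ℤ × ℤ)} (hm : m = 1 ∨ m = 2)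
    (hl : l.IsChain IsStep) (hhead : l.head? = some (a, m))
    (hlast : l.getLast? = some (b, 1)) :
    ∃ s, (m = 2 ∨ s = a) ∧ a ≤ s ∧ s ≤ b ∧ l = hook m a s b := by
  rcases hm with rfl | rfl
  · have hl := eq_seg_of_isChain hl hhead hlast
    have hab : a ≤ b := (mem_seg.1 (hl ▸ List.mem_of_getLast? hlast)).2.1
    exact ⟨a, Or.inr rfl, le_rfl, hab, hl⟩
  · obtain ⟨s, has, hsb, hl⟩ := exists_eq_hook_two hl hhead hlast
    exact ⟨s, Or.inl rfl, has, hsb, hl⟩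

theorem pathWeight_hook_two (rl : ℤ → ℤ) (D : ℤ → ℤ → ℝ) {a s b : ℤ}
    (hD₁ : ∀ x, rl 1 ≤ x → D 1 x ≠ 0) (hD₂ : ∀ x, rl 2 ≤ x → D 2 x ≠ 0)
    (ha : rl 2 ≤ a) (hs : rl 1 ≤ s) (has : a ≤ s) (hsb : s ≤ b) :
    pathWeight rl D (hook 2 a s b)
      = D 2 s / clo (rl 2) (D 2) (a - 1) * (D 1 b / clo (rl 1) (D 1) (s - 1)) := by
  rw [hook, if_pos rfl, pathWeight_append, pathWeight_seg rl D hD₂ ha has,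
    pathWeight_seg rl D hD₁ hs hsb]

theorem hook_disjoint_iff {m m' a a' s s' b b' : ℤ} (ha : a < a') (hb : b ≤ b')
    (hs : m = 2 ∨ s = a) (hs' : m' = 2 ∨ s' = a') (has : a ≤ s) (hsb : s ≤ b)
    (has' : a' ≤ s') :
    (∀ p ∈ hook m a s b, p ∉ hook m' a' s' b') ↔ s < a' ∧ b < s' := by
  constructor
  · intro h
    have hbs' : b < s' := by
      by_contra hc
      exact h (b, 1) (mem_hook.2 (Or.inr ⟨rfl, hsb, le_rfl⟩))
        (mem_hook.2 (Or.inr ⟨rfl, by omega, hb⟩))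
    refine ⟨?_, hbs'⟩
    by_contra hc
    rcases hs with rfl | rfl
    · rcases hs' with rfl | rfl
      · exact h (a', 2) (mem_hook.2 (Or.inl ⟨rfl, rfl, ha.le, by omega⟩))
          (mem_hook.2 (Or.inl ⟨rfl, rfl, le_rfl, has'⟩))
      · omega
    · omega
  · rintro ⟨h₁, h₂⟩ p hp hp'
    rw [mem_hook] at hp hp'
    omega

/-! ### Multipaths of hooks -/

/-- The admissible switch points of the `i`-th path of a non-intersecting multipath of hooks from
`((u j, lev j))_j` to `((v j, 1))_j`. -/
noncomputable def switchSet {k : ℕ} (lev u v : Fin k → ℤ) (i : Fin k) : Finset ℤ :=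
  {x ∈ Icc (u i) (v i) | (lev i = 2 ∨ x = u i) ∧ (∀ j < i, v j < x) ∧ ∀ j, i < j → x < u j}

section Switch

variable {k : ℕ} {rl : ℤ → ℤ} {lev u v : Fin k → ℤ}

theorem mem_switchSet {i : Fin k} {x : ℤ} :
    x ∈ switchSet lev u v i ↔ (u i ≤ x ∧ x ≤ v i) ∧ (lev i = 2 ∨ x = u i) ∧
      (∀ j < i, v j < x) ∧ ∀ j, i < j → x < u j := by
  rw [switchSet, mem_filter, mem_Icc]

theorem hook_disjoint_iff_of_lt (hu : StrictMono u) (hv : Monotone v) {t : Fin k → ℤ}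
    (ht : ∀ i, (u i ≤ t i ∧ t i ≤ v i) ∧ (lev i = 2 ∨ t i = u i)) {i j : Fin k} (hij : i < j) :
    (∀ p ∈ hook (lev i) (u i) (t i) (v i), p ∉ hook (lev j) (u j) (t j) (v j)) ↔
      t i < u j ∧ v i < t j :=
  hook_disjoint_iff (hu hij) (hv hij.le) (ht i).2 (ht j).2 (ht i).1.1 (ht i).1.2 (ht j).1.1

theorem exists_switch_of_multipath (hlev : ∀ i, lev i = 1 ∨ lev i = 2) (hu : StrictMono u)
    (hv : Monotone v) (M : Multipath rl (fun i => (u i, lev i)) (fun i => (v i, 1))) :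
    ∃ t ∈ Fintype.piFinset (switchSet lev u v),
      ∀ i, M.pts i = hook (lev i) (u i) (t i) (v i) := by
  choose t hlevt hut htv hpts using
    fun i => exists_eq_hook (hlev i) (M.chain i) (M.head i) (M.last i)
  have ht : ∀ i, (u i ≤ t i ∧ t i ≤ v i) ∧ (lev i = 2 ∨ t i = u i) :=
    fun i => ⟨⟨hut i, htv i⟩, hlevt i⟩
  have hpair : ∀ i j, i < j → t i < u j ∧ v i < t j := fun i j hij =>
    (hook_disjoint_iff_of_lt hu hv ht hij).1 (hpts i ▸ hpts j ▸ M.disj i j hij.ne)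
  refine ⟨t, Fintype.mem_piFinset.2 fun i => mem_switchSet.2 ⟨(ht i).1, (ht i).2, ?_, ?_⟩, hpts⟩
  · exact fun j hji => (hpair j i hji).2
  · exact fun j hij => (hpair i j hij).1

noncomputable def Multipath.ofSwitch (hlev : ∀ i, lev i = 1 ∨ lev i = 2) (hu : StrictMono u)
    (hv : Monotone v) (hdom₁ : ∀ i, rl 1 ≤ u i) (hdom₂ : ∀ i, lev i = 2 → rl 2 ≤ u i)
    (t : Fin k → ℤ) (ht : t ∈ Fintype.piFinset (switchSet lev u v)) :
    Multipath rl (fun i => (u i, lev i)) (fun i => (v i, 1)) :=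
  have ht' := fun i => mem_switchSet.1 (Fintype.mem_piFinset.1 ht i)
  { pts := fun i => hook (lev i) (u i) (t i) (v i)
    ne := fun i h => by simpa [h] using getLast?_hook (m := lev i) (a := u i) (ht' i).1.2
    chain := fun i => isChain_hook _ _ _ _
    head := fun i => head?_hook (hlev i) (ht' i).2.1 (ht' i).1.1 (ht' i).1.2
    last := fun i => getLast?_hook (ht' i).1.2
    dom := fun i p hp => by
      rcases mem_hook.1 hp with ⟨hlev2, hp2, hp1, -⟩ | ⟨hp2, hp1, -⟩
      · rw [hp2]; exact (hdom₂ i hlev2).trans hp1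
      · rw [hp2]; exact ((hdom₁ i).trans (ht' i).1.1).trans hp1
    disj := fun i j hij => by
      have hpair := fun i j (h : i < j) => (hook_disjoint_iff_of_lt hu hv
        (t := t) (fun i => ⟨(ht' i).1, (ht' i).2.1⟩) h).2 ⟨(ht' i).2.2.2 j h, (ht' j).2.2.1 i h⟩
      rcases hij.lt_or_gt with h | h
      · exact hpair i j h
      · exact fun p hp hp' => hpair j i h p hp' hp }

theorem partFn_eq_prod_sum (D : ℤ → ℤ → ℝ) (hlev : ∀ i, lev i = 1 ∨ lev i = 2)
    (hu : StrictMono u) (hv : Monotone v) (hdom₁ : ∀ i, rl 1 ≤ u i)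
    (hdom₂ : ∀ i, lev i = 2 → rl 2 ≤ u i) :
    partFn rl D (fun i => (u i, lev i)) (fun i => (v i, 1))
      = ∏ i, ∑ x ∈ switchSet lev u v i, pathWeight rl D (hook (lev i) (u i) x (v i)) := by
  let φ : Fintype.piFinset (switchSet lev u v) → Multipath rl _ _ :=
    fun t => Multipath.ofSwitch hlev hu hv hdom₁ hdom₂ t.1 t.2
  have hφ : Function.Bijective φ := by
    refine ⟨fun t t' h => Subtype.ext (funext fun i => ?_), fun M => ?_⟩
    · have ht := mem_switchSet.1 (Fintype.mem_piFinset.1 t.2 i)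
      have ht' := mem_switchSet.1 (Fintype.mem_piFinset.1 t'.2 i)
      exact hook_inj (m := lev i) (a := u i) ht.1.2 ht'.1.2 (congrFun (congrArg Multipath.pts h) i)
    · obtain ⟨t, ht, hpts⟩ := exists_switch_of_multipath hlev hu hv M
      refine ⟨⟨t, ht⟩, ?_⟩
      rcases M with ⟨pts, _, _, _, _, _, _⟩
      obtain rfl : pts = _ := funext hpts
      rfl
  rw [prod_univ_sum, partFn, ← (Equiv.ofBijective φ hφ).tsum_eq, ← Finset.tsum_subtype]
  rfl

end Switch

/-! ### Switch intervals -/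

def lowerSwitch {n : ℕ} (u v : Fin (n + 1) → ℤ) : Fin (n + 1) → ℤ :=
  Fin.cases (u 0) fun j => max (u j.succ) (v j.castSucc + 1)

def upperSwitch {n : ℕ} (u v : Fin (n + 1) → ℤ) : Fin (n + 1) → ℤ :=
  Fin.lastCases (v (Fin.last n)) fun j => min (v j.castSucc) (u j.succ - 1)

section Box

variable {n : ℕ} {lev u v : Fin (n + 1) → ℤ}

theorem lowerSwitch_le_iff (hv : Monotone v) {i : Fin (n + 1)} {x : ℤ} :
    lowerSwitch u v i ≤ x ↔ u i ≤ x ∧ ∀ j < i, v j < x := by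
  induction i using Fin.cases with
  | zero => simp [lowerSwitch]
  | succ i =>
    simp only [lowerSwitch, Fin.cases_succ, max_le_iff, Int.add_one_le_iff]
    refine and_congr_right fun _ => ⟨fun h j hj => ?_, fun h => h _ Fin.castSucc_lt_succ⟩
    exact (hv (Fin.le_castSucc_iff.2 hj)).trans_lt h

theorem le_upperSwitch_iff (hu : Monotone u) {i : Fin (n + 1)} {x : ℤ} :
    x ≤ upperSwitch u v i ↔ x ≤ v i ∧ ∀ j, i < j → x < u j := by
  induction i using Fin.lastCases with
  | last => simp [upperSwitch, not_lt.2 (Fin.le_last _)]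
  | cast i =>
    simp only [upperSwitch, Fin.lastCases_castSucc, le_min_iff, Int.le_sub_one_iff]
    refine and_congr_right fun _ => ⟨fun h j hj => ?_, fun h => h _ Fin.castSucc_lt_succ⟩
    exact h.trans_le (hu (Fin.castSucc_lt_iff_succ_le.1 hj))

theorem switchSet_two (hu : Monotone u) (hv : Monotone v) (i : Fin (n + 1)) :
    switchSet (fun _ => 2) u v i = Icc (lowerSwitch u v i) (upperSwitch u v i) := by
  ext x
  rw [mem_switchSet, mem_Icc, lowerSwitch_le_iff hv, le_upperSwitch_iff hu]
  tauto

theorem switchSet_of_eq_two {i : Fin (n + 1)} (h : lev i = 2) :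
    switchSet lev u v i = switchSet (fun _ => 2) u v i := by
  ext x
  simp only [mem_switchSet, h, true_or]

theorem switchSet_of_ne_two (hu : Monotone u) (hv : Monotone v) {i : Fin (n + 1)}
    (h : lev i ≠ 2) (hi : u i ∈ Icc (lowerSwitch u v i) (upperSwitch u v i)) :
    switchSet lev u v i = {u i} := by
  rw [mem_Icc, lowerSwitch_le_iff hv, le_upperSwitch_iff hu] at hi
  ext x
  simp only [mem_switchSet, h, false_or, mem_singleton]
  constructor
  · exact fun hx => hx.2.1
  · rintro rfl
    exact ⟨⟨le_rfl, hi.2.1⟩, rfl, hi.1.2, hi.2.2⟩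

theorem map_max_mul_map_min {M : Type*} [CommMonoid M] (f : ℤ → M) (a b : ℤ) :
    f (max a b) * f (min a b) = f a * f b := by
  rcases le_total a b with h | h
  · rw [max_eq_right h, min_eq_left h, mul_comm]
  · rw [max_eq_left h, min_eq_right h]

theorem prod_lowerSwitch_mul_upperSwitch {M : Type*} [CommMonoid M] (f : ℤ → M) :
    ∏ i, f (lowerSwitch u v i - 1) * f (upperSwitch u v i) = ∏ i, f (u i - 1) * f (v i) := by
  rw [prod_mul_distrib, prod_mul_distrib, Fin.prod_univ_succ,
    Fin.prod_univ_castSucc (fun i => f (upperSwitch u v i)), Fin.prod_univ_succ,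
    Fin.prod_univ_castSucc (fun i => f (v i))]
  simp only [lowerSwitch, upperSwitch, Fin.cases_zero, Fin.cases_succ, Fin.lastCases_last,
    Fin.lastCases_castSucc]
  have key : ∀ j : Fin n, f (max (u j.succ) (v j.castSucc + 1) - 1) *
      f (min (v j.castSucc) (u j.succ - 1)) = f (u j.succ - 1) * f (v j.castSucc) := by
    intro j
    rw [← max_sub_sub_right, add_sub_cancel_right, min_comm, map_max_mul_map_min]
  rw [mul_assoc, ← mul_assoc (∏ j : Fin n, _), ← prod_mul_distrib, mul_assoc,
    ← mul_assoc (∏ j : Fin n, _), ← prod_mul_distrib]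
  simp only [key]

end Box

/-! ### The transformed weights -/

theorem Tro_one_apply_one (r : ℤ) (D : ℤ → ℤ → ℝ) :
    Tro r 1 D 1 = fun x => D 1 x * pitSum r (D 1) (D 2) x := by
  unfold Tro
  norm_num
  rfl

theorem Tro_one_apply_two (r : ℤ) (D : ℤ → ℤ → ℝ) :
    Tro r 1 D 2 = fun x => D 2 x * (pitSum r (D 1) (D 2) x)⁻¹ := by
  unfold Tro
  norm_num
  rfl

theorem sum_pathWeight_hook_two (rl : ℤ → ℤ) (D : ℤ → ℤ → ℝ) {u a b v : ℤ}
    (hD₁ : ∀ x, rl 1 ≤ x → D 1 x ≠ 0) (hD₂ : ∀ x, rl 2 ≤ x → D 2 x ≠ 0)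
    (hu : rl 2 ≤ u) (ha : rl 1 ≤ a) (hua : u ≤ a) (hbv : b ≤ v) :
    ∑ x ∈ Icc a b, pathWeight rl D (hook 2 u x v)
      = D 1 v / clo (rl 2) (D 2) (u - 1) * ∑ x ∈ Icc a b, D 2 x / clo (rl 1) (D 1) (x - 1) := by
  rw [mul_sum]
  refine sum_congr rfl fun x hx => ?_
  rw [mem_Icc] at hx
  rw [pathWeight_hook_two rl D hD₁ hD₂ hu (ha.trans hx.1) (hua.trans hx.1) (hx.2.trans hbv)]
  ring

section TwoLevel

variable {r : ℤ} {D : ℤ → ℤ → ℝ}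

theorem Tro_one_apply_one_pos (hD₁ : ∀ x, r ≤ x → 0 < D 1 x) (hD₂ : ∀ x, r ≤ x → 0 < D 2 x)
    {x : ℤ} (hx : r ≤ x) : 0 < Tro r 1 D 1 x := by
  rw [Tro_one_apply_one]; exact mul_pos (hD₁ x hx) (pitSum_pos hD₁ hD₂ hx)

theorem Tro_one_apply_two_pos (hD₁ : ∀ x, r ≤ x → 0 < D 1 x) (hD₂ : ∀ x, r ≤ x → 0 < D 2 x)
    {x : ℤ} (hx : r ≤ x) : 0 < Tro r 1 D 2 x := by
  rw [Tro_one_apply_two]; exact mul_pos (hD₂ x hx) (inv_pos.2 (pitSum_pos hD₁ hD₂ hx))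

theorem sum_pathWeight_hook_two_const (hD₁ : ∀ x, r ≤ x → 0 < D 1 x)
    (hD₂ : ∀ x, r ≤ x → 0 < D 2 x) {u a b v : ℤ} (hru : r ≤ u) (hua : u ≤ a) (hab : a ≤ b + 1)
    (hbv : b ≤ v) :
    ∑ x ∈ Icc a b, pathWeight (fun _ => r) D (hook 2 u x v)
      = D 1 v / clo r (D 2) (u - 1) * (pitSum r (D 1) (D 2) b - pitSum r (D 1) (D 2) (a - 1)) := by
  rw [sum_pathWeight_hook_two _ D (fun x hx => (hD₁ x hx).ne') (fun x hx => (hD₂ x hx).ne') hru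
    (hru.trans hua) hua hbv, ← sum_Icc_sub_sub_one _ hab]
  congr 1
  exact sum_congr rfl fun x hx =>
    (pitSum_sub_pitSum_sub_one (by linarith [(mem_Icc.1 hx).1])).symm

theorem sum_pathWeight_hook_two_Tro (hD₁ : ∀ x, r ≤ x → 0 < D 1 x)
    (hD₂ : ∀ x, r ≤ x → 0 < D 2 x) {u a b v : ℤ} (hru : r < u) (hua : u ≤ a) (hab : a ≤ b + 1)
    (hbv : b ≤ v) :
    ∑ x ∈ Icc a b, pathWeight (fun m => if m = 2 then r + 1 else r) (Tro r 1 D) (hook 2 u x v)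
      = D 1 v * pitSum r (D 1) (D 2) v / clo (r + 1) (Tro r 1 D 2) (u - 1) *
          ((pitSum r (D 1) (D 2) (a - 1))⁻¹ - (pitSum r (D 1) (D 2) b)⁻¹) := by
  set S := pitSum r (D 1) (D 2) with hS_def
  have hS : ∀ x, r ≤ x → 0 < S x := fun x => pitSum_pos hD₁ hD₂
  rw [sum_pathWeight_hook_two _ _
    (fun x hx => (Tro_one_apply_one_pos hD₁ hD₂ (by simpa using hx)).ne')
    (fun x hx => (Tro_one_apply_two_pos hD₁ hD₂ (by simp at hx; omega)).ne') (by simpa using hru)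
    (by simp; omega) hua hbv]
  simp only [↓reduceIte, Int.reduceEq]
  rw [Tro_one_apply_one, mul_div_assoc]
  congr 1
  rw [← neg_sub_neg, ← sum_Icc_sub_sub_one (fun y => -(S y)⁻¹) hab]
  refine sum_congr rfl fun x hx => ?_
  have hx : r + 1 ≤ x := by linarith [(mem_Icc.1 hx).1]
  have hSx := (hS x (by omega)).ne'
  have hSx' := (hS (x - 1) (by omega)).ne'
  have hD₁x := (hD₁ (x - 1) (by omega)).ne'
  have hdiff : S x - S (x - 1) = D 2 x / D 1 (x - 1) := by
    rw [pitSum_sub_pitSum_sub_one (by omega), clo_of_le (by omega)]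
  rw [clo_of_le (by omega), Tro_one_apply_two, ← hS_def]
  field_simp
  rw [neg_sub_neg, hdiff]
  field_simp

theorem clo_Tro_one_apply_two_mul_pitSum (hD₁ : ∀ x, r ≤ x → 0 < D 1 x)
    (hD₂ : ∀ x, r ≤ x → 0 < D 2 x) {u : ℤ} (hru : r < u) :
    clo (r + 1) (Tro r 1 D 2) (u - 1) * pitSum r (D 1) (D 2) (u - 1) = clo r (D 2) (u - 1) := by
  rcases (show r ≤ u - 1 by omega).eq_or_lt with h | h
  · rw [← h, clo_of_lt (lt_add_one r), one_mul, clo_of_le le_rfl,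
      ← sub_zero (pitSum r _ _ r), ← pitSum_of_lt (f := D 1) (g := D 2) (sub_one_lt r),
      pitSum_sub_pitSum_sub_one le_rfl, clo_of_lt (sub_one_lt r), div_one]
  · rw [clo_of_le (by omega), clo_of_le h.le, Tro_one_apply_two,
      inv_mul_cancel_right₀ (pitSum_pos hD₁ hD₂ h.le).ne']

theorem sum_hook_Tro_mul (hD₁ : ∀ x, r ≤ x → 0 < D 1 x) (hD₂ : ∀ x, r ≤ x → 0 < D 2 x)
    {u a b v : ℤ} (hru : r < u) (hua : u ≤ a) (hab : a ≤ b) (hbv : b ≤ v) :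
    (∑ x ∈ Icc a b, pathWeight (fun m => if m = 2 then r + 1 else r) (Tro r 1 D) (hook 2 u x v)) *
      (pitSum r (D 1) (D 2) (a - 1) * pitSum r (D 1) (D 2) b)
    = (∑ x ∈ Icc a b, pathWeight (fun _ => r) D (hook 2 u x v)) *
      (pitSum r (D 1) (D 2) (u - 1) * pitSum r (D 1) (D 2) v) := by
  rw [sum_pathWeight_hook_two_Tro hD₁ hD₂ hru hua (by omega) hbv,
    sum_pathWeight_hook_two_const hD₁ hD₂ hru.le hua (by omega) hbv,
    ← clo_Tro_one_apply_two_mul_pitSum hD₁ hD₂ hru]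
  have := clo_pos (fun x (hx : r + 1 ≤ x) => Tro_one_apply_two_pos hD₁ hD₂ (x := x) (by omega))
    (u - 1)
  have := pitSum_pos hD₁ hD₂ (x := a - 1) (by omega)
  have := pitSum_pos hD₁ hD₂ (x := u - 1) (by omega)
  have := pitSum_pos hD₁ hD₂ (x := b) (by omega)
  field_simp

theorem pathWeight_seg_Tro_mul (hD₁ : ∀ x, r ≤ x → 0 < D 1 x) (hD₂ : ∀ x, r ≤ x → 0 < D 2 x)
    {b v : ℤ} (hrb : r ≤ b) (hbv : b ≤ v) :
    pathWeight (fun m => if m = 2 then r + 1 else r) (Tro r 1 D) (seg 1 r v) *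
      pitSum r (D 1) (D 2) b
    = (∑ x ∈ Icc r b, pathWeight (fun _ => r) D (hook 2 r x v)) * pitSum r (D 1) (D 2) v := by
  rw [sum_pathWeight_hook_two_const hD₁ hD₂ le_rfl le_rfl (by omega) hbv, pathWeight_seg _ _
    (fun x hx => (Tro_one_apply_one_pos hD₁ hD₂ (by simpa using hx)).ne') (by simp)
    (hrb.trans hbv)]
  simp only [↓reduceIte, Int.reduceEq]
  rw [clo_of_lt (sub_one_lt r), clo_of_lt (sub_one_lt r), pitSum_of_lt (sub_one_lt r),
    Tro_one_apply_one]
  ring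

theorem sum_switchSet_Tro_mul (hD₁ : ∀ x, r ≤ x → 0 < D 1 x) (hD₂ : ∀ x, r ≤ x → 0 < D 2 x)
    {n : ℕ} {u v : Fin (n + 1) → ℤ} (hur : ∀ i, r ≤ u i) (hu : StrictMono u) (hv : Monotone v)
    {i : Fin (n + 1)} (hi : lowerSwitch u v i ≤ upperSwitch u v i) :
    (∑ x ∈ switchSet (fun j => min 2 (u j - r + 1)) u v i,
        pathWeight (fun m => if m = 2 then r + 1 else r) (Tro r 1 D)
          (hook (min 2 (u i - r + 1)) (u i) x (v i))) *
      (clo r (pitSum r (D 1) (D 2)) (lowerSwitch u v i - 1) *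
        clo r (pitSum r (D 1) (D 2)) (upperSwitch u v i))
    = (∑ x ∈ switchSet (fun _ => 2) u v i, pathWeight (fun _ => r) D (hook 2 (u i) x (v i))) *
      (clo r (pitSum r (D 1) (D 2)) (u i - 1) * clo r (pitSum r (D 1) (D 2)) (v i)) := by
  have hlower := (lowerSwitch_le_iff (u := u) (i := i) hv).1 le_rfl
  have hupper := (le_upperSwitch_iff (v := v) (i := i) hu.monotone).1 le_rfl
  rw [switchSet_two hu.monotone hv]
  rcases (hur i).eq_or_lt with hri | hri
  · obtain rfl : i = 0 := by
      by_contra h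
      obtain ⟨j, rfl⟩ := Fin.exists_succ_eq.2 h
      linarith [hu (Fin.succ_pos j), hur 0]
    have hlower0 : lowerSwitch u v 0 = u 0 := rfl
    rw [hlower0] at hi ⊢
    rw [switchSet_of_ne_two hu.monotone hv (by omega) (mem_Icc.2 ⟨hlower0.le, hi⟩),
      sum_singleton, ← hri, show min 2 (r - r + 1) = 1 by omega, hook_one,
      clo_of_lt (sub_one_lt r), one_mul, one_mul, clo_of_le (by omega), clo_of_le (by omega)]
    exact pathWeight_seg_Tro_mul hD₁ hD₂ (by omega) hupper.1
  · have hlev : min 2 (u i - r + 1) = 2 := by omega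
    rw [switchSet_of_eq_two (lev := fun j => min 2 (u j - r + 1)) hlev,
      switchSet_two hu.monotone hv, hlev, clo_of_le (by omega), clo_of_le (by omega),
      clo_of_le (by omega), clo_of_le (by omega)]
    exact sum_hook_Tro_mul hD₁ hD₂ hri hlower.1 hi hupper.1

end TwoLevel

theorem two_level_invariance_general (r : ℤ) (D : ℤ → ℤ → ℝ)
    (hD : ∀ i : ℤ, i = 1 ∨ i = 2 → ∀ x : ℤ, r ≤ x → 0 < D i x)
    (k : ℕ) (hk : 1 ≤ k) (u v : Fin k → ℤ)
    (hur : ∀ i, r ≤ u i)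
    (hu : StrictMono u) (hv : StrictMono v)
    (hpair : Nonempty (Multipath (fun _ => r)
      (fun i => (u i, 2)) (fun i => (v i, 1)))) :
    partFn (fun _ => r) D (fun i => (u i, 2)) (fun i => (v i, 1))
      = partFn (fun i => if i = 2 then r + 1 else r) (Tro r 1 D)
          (fun i => (u i, min 2 (u i - r + 1))) (fun i => (v i, 1)) := by
  obtain ⟨n, rfl⟩ : ∃ n, k = n + 1 := ⟨k - 1, by omega⟩
  have hD₁ : ∀ x, r ≤ x → 0 < D 1 x := hD 1 (Or.inl rfl)
  have hD₂ : ∀ x, r ≤ x → 0 < D 2 x := hD 2 (Or.inr rfl)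
  rw [partFn_eq_prod_sum (lev := fun _ => 2) D (fun _ => Or.inr rfl) hu hv.monotone hur
      (fun i _ => hur i),
    partFn_eq_prod_sum (lev := fun i => min 2 (u i - r + 1)) (Tro r 1 D)
      (fun i => by have := hur i; omega) hu hv.monotone (fun i => by simpa using hur i)
      (fun i hi => by simp only [↓reduceIte]; omega)]
  obtain ⟨t, ht, -⟩ := exists_switch_of_multipath (fun _ => Or.inr rfl) hu hv.monotone hpair.some
  have hbox : ∀ i, lowerSwitch u v i ≤ upperSwitch u v i := fun i =>
    nonempty_Icc.1 ⟨t i, switchSet_two hu.monotone hv.monotone i ▸ Fintype.mem_piFinset.1 ht i⟩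
  have hS : ∀ y, 0 < clo r (pitSum r (D 1) (D 2)) y := clo_pos fun x => pitSum_pos hD₁ hD₂
  have hP : ∏ i, clo r (pitSum r (D 1) (D 2)) (lowerSwitch u v i - 1) *
      clo r (pitSum r (D 1) (D 2)) (upperSwitch u v i) ≠ 0 :=
    (prod_pos fun i _ => mul_pos (hS _) (hS _)).ne'
  refine mul_right_cancel₀ hP ?_
  conv_lhs => rw [prod_lowerSwitch_mul_upperSwitch]
  rw [← prod_mul_distrib, ← prod_mul_distrib]
  exact prod_congr rfl fun i _ => (sum_switchSet_Tro_mul hD₁ hD₂ hur hu hv.monotone (hbox i)).symm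

/-- **Step 2 of the proof of Theorem 2.6** (`n = 2`, general `k`): for an endpoint pair
`U = ((u_i,2))_i`, `V = ((v_i,1))_i` with all coordinates `≥ r`,
`D[U→V] = (𝒯_{r,1}D)[⇑_{r,1}U → V]` where `⇑_{r,1}U = ((u_i, 2∧(u_i−r+1)))_i`. -/
theorem two_level_invariance (r : ℤ) (hr : 1 ≤ r) (D : ℤ → ℤ → ℝ)
    (hD : ∀ i : ℤ, i = 1 ∨ i = 2 → ∀ x : ℤ, r ≤ x → 0 < D i x)
    (k : ℕ) (hk : 1 ≤ k) (u v : Fin k → ℤ)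
    (hur : ∀ i, r ≤ u i) (hvr : ∀ i, r ≤ v i)
    (hu : StrictMono u) (hv : StrictMono v)
    (hpair : Nonempty (Multipath (fun _ => r)
      (fun i => (u i, 2)) (fun i => (v i, 1)))) :
    partFn (fun _ => r) D (fun i => (u i, 2)) (fun i => (v i, 1))
      = partFn (fun i => if i = 2 then r + 1 else r) (Tro r 1 D)
          (fun i => (u i, min 2 (u i - r + 1))) (fun i => (v i, 1)) :=
  two_level_invariance_general r D hD k hk u v hur hu hv hpair
end

section
/- Let f_1, f_2 : [0,∞) → ℝ be continuous and for 0 ≤ x < y define s(x,y) := log ∫_x^y e^{f_2(r)−f_1(r)} dr. Then for all 0 < u < v, s(u,v) − s(0,v) − s(0,u) = log ∫_u^v e^{f_2(t) − f_1(t) − 2 s(0,t)} dt. Equivalently, the semi-discrete point-to-point free energy with n = 2 levels is invariant under the semi-discrete geometric Pitman transform: f[(u,2)→(v,1)] = (𝒯f)[(u,2)→(v,1)], where (𝒯f)_1(t) = f_1(t) + log∫_0^t e^{f_2(r)−f_1(r)}dr and (𝒯f)_2(t) = f_2(t) − log∫_0^t e^{f_2(r)−f_1(r)}dr. -/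
/-!
With `g = e^{f₂ − f₁}` and `G(t) = ∫_0^t g`, the left side is `log (∫_u^v g / (G u · G v))`
and the integrand on the right is `g / G²`, the derivative of `−1/G`. So the right side is
`log (1/G(u) − 1/G(v))`, which is the left side because `G v − G u = ∫_u^v g`.
-/

open Set MeasureTheory

section Primitive

variable {g : ℝ → ℝ} {c : ℝ}

theorem ContinuousOn.intervalIntegrable_of_Ici (hg : ContinuousOn g (Ici c)) {a b : ℝ}
    (ha : c ≤ a) (hb : c ≤ b) : IntervalIntegrable g volume a b :=
  (hg.mono fun _ hx => (le_min ha hb).trans hx.1).intervalIntegrable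

theorem ContinuousOn.hasDerivAt_integral_of_Ici (hg : ContinuousOn g (Ici c)) {t : ℝ}
    (ht : c < t) : HasDerivAt (fun x => ∫ r in c..x, g r) (g t) t := by
  have hnhds : Ici c ∈ nhds t := Ici_mem_nhds ht
  exact intervalIntegral.integral_hasDerivAt_right (hg.intervalIntegrable_of_Ici le_rfl ht.le)
    ⟨Ici c, hnhds, hg.aestronglyMeasurable measurableSet_Ici⟩ (hg.continuousAt hnhds)

theorem ContinuousOn.integral_pos_of_Ici (hg : ContinuousOn g (Ici c))
    (hpos : ∀ t ∈ Ioi c, 0 < g t) {a b : ℝ} (ha : c ≤ a) (hab : a < b) :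
    0 < ∫ r in a..b, g r :=
  intervalIntegral.intervalIntegral_pos_of_pos_on
    (hg.intervalIntegrable_of_Ici ha (ha.trans hab.le)) (fun r hr => hpos r (ha.trans_lt hr.1)) hab

theorem integral_deriv_div_sq {F F' : ℝ → ℝ} {u v : ℝ}
    (hF : ∀ t ∈ uIcc u v, HasDerivAt F (F' t) t) (hF0 : ∀ t ∈ uIcc u v, F t ≠ 0)
    (hF' : ContinuousOn F' (uIcc u v)) :
    ∫ t in u..v, F' t / F t ^ 2 = (F u)⁻¹ - (F v)⁻¹ := by
  have hFcont : ContinuousOn F (uIcc u v) := fun t ht =>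
    (hF t ht).continuousAt.continuousWithinAt
  have hderiv : ∀ t ∈ uIcc u v, HasDerivAt (fun x => -(F x)⁻¹) (F' t / F t ^ 2) t :=
    fun t ht => (((hF t ht).inv (hF0 t ht)).neg).congr_deriv (by ring)
  have hint : IntervalIntegrable (fun t => F' t / F t ^ 2) volume u v :=
    (hF'.div (hFcont.pow 2) fun t ht => pow_ne_zero 2 (hF0 t ht)).intervalIntegrable
  rw [intervalIntegral.integral_eq_sub_of_hasDerivAt hderiv hint]
  ring

theorem integral_div_sq_integral_eq (hg : ContinuousOn g (Ici c)) (hpos : ∀ t ∈ Ioi c, 0 < g t)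
    {u v : ℝ} (hu : c < u) (huv : u ≤ v) :
    ∫ t in u..v, g t / (∫ r in c..t, g r) ^ 2
      = (∫ t in u..v, g t) / ((∫ r in c..u, g r) * ∫ r in c..v, g r) := by
  have hprim_pos : ∀ t, c < t → 0 < ∫ r in c..t, g r := fun t ht =>
    hg.integral_pos_of_Ici hpos le_rfl ht
  have hc_lt : ∀ t ∈ uIcc u v, c < t := fun t ht =>
    hu.trans_le (uIcc_of_le huv ▸ ht).1
  have hadd : (∫ t in u..v, g t) = (∫ r in c..v, g r) - ∫ r in c..u, g r :=
    (intervalIntegral.integral_interval_sub_left (hg.intervalIntegrable_of_Ici le_rfl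
      (hu.le.trans huv)) (hg.intervalIntegrable_of_Ici le_rfl hu.le)).symm
  rw [integral_deriv_div_sq (fun t ht => hg.hasDerivAt_integral_of_Ici (hc_lt t ht))
    (fun t ht => (hprim_pos t (hc_lt t ht)).ne')
    (hg.mono fun t ht => (hc_lt t ht).le), hadd]
  have := hprim_pos u hu
  have := hprim_pos v (hu.trans_le huv)
  field_simp

end Primitive

theorem semidiscrete_two_level_identity_general (f₁ f₂ : ℝ → ℝ)
    (h₁ : ContinuousOn f₁ (Set.Ici 0)) (h₂ : ContinuousOn f₂ (Set.Ici 0))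
    (u v : ℝ) (hu : 0 < u) (huv : u < v)
    (s : ℝ → ℝ → ℝ)
    (hs : ∀ x y : ℝ, s x y = Real.log (∫ t in x..y, Real.exp (f₂ t - f₁ t))) :
    s u v - s 0 v - s 0 u
      = Real.log (∫ t in u..v, Real.exp (f₂ t - f₁ t - 2 * s 0 t)) := by
  set g : ℝ → ℝ := fun t => Real.exp (f₂ t - f₁ t)
  have hg : ContinuousOn g (Ici 0) := Real.continuous_exp.comp_continuousOn (h₂.sub h₁)
  have hg_pos : ∀ t ∈ Ioi 0, 0 < g t := fun t _ => Real.exp_pos _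
  have hprim_pos : ∀ t, 0 < t → 0 < ∫ r in (0 : ℝ)..t, g r := fun t ht =>
    hg.integral_pos_of_Ici hg_pos le_rfl ht
  have hintegrand : ∀ t ∈ uIcc u v,
      Real.exp (f₂ t - f₁ t - 2 * s 0 t) = g t / (∫ r in (0 : ℝ)..t, g r) ^ 2 := by
    intro t ht
    have hF := hprim_pos t (hu.trans_le (uIcc_of_le huv.le ▸ ht).1)
    rw [hs, sub_eq_add_neg, Real.exp_add, Real.exp_neg, mul_comm 2, Real.exp_mul,
      Real.exp_log hF, Real.rpow_two, div_eq_mul_inv]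
  have hGu := hprim_pos u hu
  have hGv := hprim_pos v (hu.trans huv)
  rw [intervalIntegral.integral_congr hintegrand,
    integral_div_sq_integral_eq hg hg_pos hu huv.le, hs, hs, hs,
    Real.log_div (hg.integral_pos_of_Ici hg_pos hu.le huv).ne' (mul_pos hGu hGv).ne',
    Real.log_mul hGu.ne' hGv.ne']
  ring

/-- **The identity (3.5) (Step 1 of the proof of Theorem 3.4):** with
`s(x,y) = log ∫_x^y e^{f_2 − f_1}`, for `0 < u < v`,
`s(u,v) − s(0,v) − s(0,u) = log ∫_u^v e^{f_2(t) − f_1(t) − 2 s(0,t)} dt`;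
equivalently, the semi-discrete two-level point-to-point free energy is invariant
under the semi-discrete geometric Pitman transform. -/
theorem semidiscrete_two_level_identity (f₁ f₂ : ℝ → ℝ)
    (h₁ : ContinuousOn f₁ (Set.Ici 0)) (h₂ : ContinuousOn f₂ (Set.Ici 0))
    (h₁0 : f₁ 0 = 0) (h₂0 : f₂ 0 = 0)
    (u v : ℝ) (hu : 0 < u) (huv : u < v)
    (s : ℝ → ℝ → ℝ)
    (hs : ∀ x y : ℝ, s x y = Real.log (∫ t in x..y, Real.exp (f₂ t - f₁ t))) :
    s u v - s 0 v - s 0 u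
      = Real.log (∫ t in u..v, Real.exp (f₂ t - f₁ t - 2 * s 0 t)) :=
  semidiscrete_two_level_identity_general f₁ f₂ h₁ h₂ u v hu huv s hs
end
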